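/- arXiv:1506.05900 — 2 statements merged into one kernel-verified Lean document; each statement's English description precedes it below -/
import Mathlib

section
/- Let F be a class of mappings from X into the closed unit ball B of ℝⁿ, each having an (η, ε)-unique k-means solution on X. Then the covering numbers satisfy N(H^F, d_{L1}^X, 4ε) ≤ k! · ( N(F, d_{L1}^X, η/12) )², where on binary-valued functions d_{L1}^X(h, h') = (1/|X|) Σ_{x∈X} |h(x) − h'(x)|. -/
open scoped BigOperators symmDiff

noncomputable section

/-- Euclidean space `ℝ^n`. -/
abbrev Euc (n : ℕ) : Type := EuclideanSpace ℝ (Fin n)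

variable {X : Type*} [Fintype X] [DecidableEq X] {n k : ℕ}

/-- `C` is a `k`-clustering of `X`: an ordered tuple of pairwise disjoint subsets covering `X`. -/
def IsClustering (k : ℕ) (C : Fin k → Finset X) : Prop :=
  (∀ i j, i ≠ j → Disjoint (C i) (C j)) ∧ Finset.univ.biUnion C = Finset.univ

/-- Sample-based clustering difference `Δ_S`. -/
def clusterDiffOn (k : ℕ) (S : Finset X) (C₁ C₂ : Fin k → Finset X) : ℝ :=
  ⨅ σ : Equiv.Perm (Fin k),
    (1 / (S.card : ℝ)) * ∑ i, (((C₁ i ∩ S) ∆ (C₂ (σ i) ∩ S)).card : ℝ)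

/-- Clustering difference `Δ_X`. -/
def clusterDiff (k : ℕ) (C₁ C₂ : Fin k → Finset X) : ℝ :=
  clusterDiffOn k Finset.univ C₁ C₂

/-- k-means cost of `X` under mapping `f` with a `k`-tuple of centers `μ`. -/
def costCenters (k : ℕ) (f : X → Euc n) (μ : Fin k → Euc n) : ℝ :=
  (1 / (Fintype.card X : ℝ)) * ∑ x, ⨅ j : Fin k, ‖f x - μ j‖ ^ 2

/-- k-means cost of a clustering `C` under `f`, with per-cluster optimal centers. -/
def costClustering (k : ℕ) (f : X → Euc n) (C : Fin k → Finset X) : ℝ :=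
  (1 / (Fintype.card X : ℝ)) * ∑ i, ⨅ μ : Euc n, ∑ x ∈ C i, ‖f x - μ‖ ^ 2

/-- Index of a nearest center to `f x`, ties broken by smallest index. -/
def nearestIdx [NeZero k] (f : X → Euc n) (μ : Fin k → Euc n) (x : X) : Fin k :=
  (Finset.univ.filter fun j => ∀ l, ‖f x - μ j‖ ≤ ‖f x - μ l‖).min' (by
    have hk : 0 < k := Nat.pos_of_ne_zero (NeZero.ne k)
    obtain ⟨j, -, hj⟩ := Finset.exists_min_image (Finset.univ : Finset (Fin k))
      (fun j => ‖f x - μ j‖) ⟨⟨0, hk⟩, Finset.mem_univ _⟩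
    exact ⟨j, Finset.mem_filter.mpr ⟨Finset.mem_univ _, fun l => hj l (Finset.mem_univ _)⟩⟩)

/-- The Voronoi `k`-clustering of `X` induced by `(f, μ)`, ties broken by smallest index. -/
def voronoiClustering [NeZero k] (f : X → Euc n) (μ : Fin k → Euc n) : Fin k → Finset X :=
  fun i => Finset.univ.filter fun x => nearestIdx f μ x = i

/-- `f` has a unique optimal k-means clustering `Cf`: minimizers of the center-based cost
exist and all of them induce the same Voronoi clustering, namely `Cf`. -/
def HasUniqueOptClustering [NeZero k] (f : X → Euc n) (Cf : Fin k → Finset X) : Prop :=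
  (∃ μ : Fin k → Euc n, ∀ ν, costCenters k f μ ≤ costCenters k f ν) ∧
  ∀ μ : Fin k → Euc n, (∀ ν, costCenters k f μ ≤ costCenters k f ν) →
    voronoiClustering f μ = Cf

/-- `f` has an `(η, ε)`-unique k-means solution on `X`, with optimal clustering `Cf`. -/
def HasUniqueSolution [NeZero k] (f : X → Euc n) (Cf : Fin k → Finset X) (η ε : ℝ) : Prop :=
  HasUniqueOptClustering f Cf ∧
  ∀ P : Fin k → Finset X, IsClustering k P →
    costClustering k f P < costClustering k f Cf + η → clusterDiff k Cf P < ε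

/-- `L₁` distance `d_{L1}^X` between two functions on `X`. -/
def dL1 {E : Type*} [SeminormedAddGroup E] (f g : X → E) : ℝ :=
  (1 / (Fintype.card X : ℝ)) * ∑ x, ‖f x - g x‖

/-- The indicator function `h_σ^{f₁,f₂}` of `∪_i (C¹_i Δ C²_{σ(i)})`. -/
def indSymmDiff (C₁ C₂ : Fin k → Finset X) (σ : Equiv.Perm (Fin k)) : X → ℝ :=
  fun x => if x ∈ Finset.univ.biUnion (fun i => C₁ i ∆ C₂ (σ i)) then 1 else 0

/-- The class `H^F`, where `Cf f` is the optimal clustering of `f`. -/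
def HF (F : Set (X → Euc n)) (Cf : (X → Euc n) → Fin k → Finset X) : Set (X → ℝ) :=
  {h | ∃ f₁ ∈ F, ∃ f₂ ∈ F, ∃ σ : Equiv.Perm (Fin k), h = indSymmDiff (Cf f₁) (Cf f₂) σ}

/-- Internal covering number `N(G, d, r)`. -/
def coveringNumber {α : Type*} (G : Set α) (d : α → α → ℝ) (r : ℝ) : ℕ :=
  sInf {m : ℕ | ∃ T : Finset α, ↑T ⊆ G ∧ T.card = m ∧ ∀ g ∈ G, ∃ t ∈ T, d g t ≤ r}

/-- External covering number `N_ext(G, d, r)`. -/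
def extCoveringNumber {α : Type*} (G : Set α) (d : α → α → ℝ) (r : ℝ) : ℕ :=
  sInf {m : ℕ | ∃ T : Finset α, T.card = m ∧ ∀ g ∈ G, ∃ t ∈ T, d g t ≤ r}

/-- `G` pseudo-shatters the finite set `S`. -/
def PseudoShatters (G : Set (X → ℝ)) (S : Finset X) : Prop :=
  ∃ r : X → ℝ, ∀ b : X → Bool, ∃ g ∈ G, ∀ x ∈ S, (r x < g x ↔ b x = true)

/-- Pseudo-dimension of a class of real-valued functions. -/
def pdim (G : Set (X → ℝ)) : ℕ :=
  sSup {m : ℕ | ∃ S : Finset X, S.card = m ∧ PseudoShatters G S}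

/-- The class of `i`-th coordinate functions of members of `F`. -/
def coordClass (F : Set (X → Euc n)) (i : Fin n) : Set (X → ℝ) :=
  {g | ∃ f ∈ F, g = fun x => f x i}

/-- Vector-valued pseudo-dimension `Pdim(F) = n · max_i Pdim(F_i)`. -/
def vPdim (n : ℕ) (F : Set (X → Euc n)) : ℕ :=
  n * Finset.univ.sup fun i : Fin n => pdim (coordClass F i)

/-!
Replacing `f` by `t` with `dL1 f t ≤ η / 12` (both valued in the unit ball) changes the k-means
cost of every clustering by at most `4 * dL1 f t`, since optimal centers may be taken in the unit
ball. Hence the optimal clustering of `t` is `8η/12`-near-optimal for `f`, and by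
`(η, ε)`-uniqueness it is `ε`-close to that of `f`. Take a minimal `η/12`-cover `T` of `F`, and
cover `h_σ^{f₁,f₂}` by `h_ρ^{t₁,t₂}` with `tᵢ ∈ T` near `fᵢ` and `ρ = τ₂ σ τ₁⁻¹`, where `τᵢ` is an
optimal matching of the clusters of `fᵢ` and `tᵢ`: the two indicators differ only on
`⋃ (C^{f₁}_i Δ C^{t₁}_{τ₁ i}) ∪ ⋃ (C^{f₂}_i Δ C^{t₂}_{τ₂ i})`, of relative size `< 2ε`.
There are at most `k! * |T|²` such functions `h_ρ^{t₁,t₂}`.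
-/

open Finset
open scoped RealInnerProductSpace

section UnitBall

variable {E : Type*} [NormedAddCommGroup E] [InnerProductSpace ℝ E]

theorem norm_sub_smul_inv_norm_le {v μ : E} (hv : ‖v‖ ≤ 1) (hμ : 1 ≤ ‖μ‖) :
    ‖v - ‖μ‖⁻¹ • μ‖ ≤ ‖v - μ‖ := by
  have hμ0 : 0 < ‖μ‖ := one_pos.trans_le hμ
  have hunit : ‖‖μ‖⁻¹ • μ‖ = 1 := by
    rw [norm_smul, norm_inv, norm_norm, inv_mul_cancel₀ hμ0.ne']
  have hinner : ⟪v, μ⟫ ≤ ‖μ‖ := (real_inner_le_norm v μ).trans (by nlinarith [norm_nonneg μ])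
  have hinv : ‖μ‖⁻¹ ≤ 1 := inv_le_one_of_one_le₀ hμ
  have hsq : ‖v - ‖μ‖⁻¹ • μ‖ ^ 2 ≤ ‖v - μ‖ ^ 2 := by
    rw [norm_sub_sq_real, norm_sub_sq_real, real_inner_smul_right, hunit]
    -- the difference is at least `(‖μ‖ - 1) ^ 2`
    have : ‖μ‖⁻¹ * ‖μ‖ = 1 := inv_mul_cancel₀ hμ0.ne'
    nlinarith [sq_nonneg (‖μ‖ - 1)]
  exact le_of_sq_le_sq hsq (norm_nonneg _)

theorem exists_norm_le_one_forall_norm_sub_le (μ : E) :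
    ∃ μ' : E, ‖μ'‖ ≤ 1 ∧ ∀ v : E, ‖v‖ ≤ 1 → ‖v - μ'‖ ≤ ‖v - μ‖ := by
  rcases le_or_gt ‖μ‖ 1 with hμ | hμ
  · exact ⟨μ, hμ, fun _ _ => le_rfl⟩
  · refine ⟨‖μ‖⁻¹ • μ, ?_, fun v hv => norm_sub_smul_inv_norm_le hv hμ.le⟩
    rw [norm_smul, norm_inv, norm_norm, inv_mul_cancel₀ (by positivity)]

theorem sq_norm_sub_le_sq_norm_sub_add {E : Type*} [SeminormedAddCommGroup E] {a b μ : E}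
    (ha : ‖a‖ ≤ 1) (hb : ‖b‖ ≤ 1) (hμ : ‖μ‖ ≤ 1) :
    ‖a - μ‖ ^ 2 ≤ ‖b - μ‖ ^ 2 + 4 * ‖a - b‖ := by
  have haμ : ‖a - μ‖ ≤ 2 := (norm_sub_le a μ).trans (by linarith)
  have hbμ : ‖b - μ‖ ≤ 2 := (norm_sub_le b μ).trans (by linarith)
  have htri := norm_sub_le_norm_sub_add_norm_sub a b μ
  nlinarith [norm_nonneg (a - b), norm_nonneg (a - μ), norm_nonneg (b - μ)]

end UnitBall

theorem le_sum_ciInf_of_forall_le_sum {ι α : Type*} [Fintype ι] [Nonempty α]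
    {g : ι → α → ℝ} {a : ℝ}
    (h : ∀ ν : ι → α, a ≤ ∑ i, g i (ν i)) : a ≤ ∑ i, ⨅ m, g i m := by
  refine le_of_forall_pos_le_add fun ε hε => ?_
  set δ := ε / (Fintype.card ι + 1)
  have hδ : 0 < δ := by positivity
  choose ν hν using fun i => exists_lt_of_ciInf_lt (lt_add_of_pos_right (⨅ m, g i m) hδ)
  have hcard : Fintype.card ι * δ ≤ ε := by
    rw [mul_div_assoc', div_le_iff₀ (by positivity)]
    nlinarith
  calc a ≤ ∑ i, g i (ν i) := h ν
    _ ≤ ∑ i, ((⨅ m, g i m) + δ) := sum_le_sum fun i _ => (hν i).le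
    _ = (∑ i, ⨅ m, g i m) + Fintype.card ι * δ := by simp [sum_add_distrib]
    _ ≤ (∑ i, ⨅ m, g i m) + ε := by linarith

theorem bddBelow_range_sum_sq_norm_sub {ι E : Type*} [SeminormedAddCommGroup E]
    (s : Finset ι) (f : ι → E) : BddBelow (Set.range fun μ : E => ∑ x ∈ s, ‖f x - μ‖ ^ 2) :=
  ⟨0, by rintro _ ⟨μ, rfl⟩; positivity⟩

theorem iInf_sum_sq_norm_sub_le_add {ι E : Type*} [NormedAddCommGroup E] [InnerProductSpace ℝ E]
    (s : Finset ι) {f g : ι → E}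
    (hf : ∀ x, ‖f x‖ ≤ 1) (hg : ∀ x, ‖g x‖ ≤ 1) :
    ⨅ μ : E, ∑ x ∈ s, ‖f x - μ‖ ^ 2 ≤
      (⨅ μ : E, ∑ x ∈ s, ‖g x - μ‖ ^ 2) + 4 * ∑ x ∈ s, ‖f x - g x‖ := by
  rw [← sub_le_iff_le_add]
  refine le_ciInf fun μ => ?_
  -- both functions take values in the unit ball, so `μ` may be moved into it
  obtain ⟨μ', hμ', hcloser⟩ := exists_norm_le_one_forall_norm_sub_le μ
  have hf_le : ∑ x ∈ s, ‖f x - μ'‖ ^ 2 ≤ ∑ x ∈ s, (‖g x - μ‖ ^ 2 + 4 * ‖f x - g x‖) := by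
    refine sum_le_sum fun x _ => (sq_norm_sub_le_sq_norm_sub_add (hf x) (hg x) hμ').trans ?_
    gcongr
    exact hcloser _ (hg x)
  rw [sum_add_distrib, ← mul_sum] at hf_le
  linarith [ciInf_le (bddBelow_range_sum_sq_norm_sub s f) μ']

section KMeans

variable {X : Type*} [Fintype X] {n k : ℕ}

theorem IsClustering.sum_sum [DecidableEq X] {C : Fin k → Finset X} (hC : IsClustering k C)
    {M : Type*} [AddCommMonoid M] (g : X → M) : ∑ i, ∑ x ∈ C i, g x = ∑ x, g x := by
  rw [← hC.2, sum_biUnion fun i _ j _ hij => hC.1 i j hij]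

theorem costClustering_le_add_dL1 [DecidableEq X] {f g : X → Euc n}
    (hf : ∀ x, ‖f x‖ ≤ 1) (hg : ∀ x, ‖g x‖ ≤ 1) {P : Fin k → Finset X} (hP : IsClustering k P) :
    costClustering k f P ≤ costClustering k g P + 4 * dL1 f g := by
  have hsum : ∑ i, ⨅ μ : Euc n, ∑ x ∈ P i, ‖f x - μ‖ ^ 2 ≤
      (∑ i, ⨅ μ : Euc n, ∑ x ∈ P i, ‖g x - μ‖ ^ 2) + 4 * ∑ x, ‖f x - g x‖ := by
    calc _ ≤ ∑ i, ((⨅ μ : Euc n, ∑ x ∈ P i, ‖g x - μ‖ ^ 2) + 4 * ∑ x ∈ P i, ‖f x - g x‖) :=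
          sum_le_sum fun i _ => iInf_sum_sq_norm_sub_le_add (P i) hf hg
      _ = _ := by rw [sum_add_distrib, ← mul_sum, hP.sum_sum]
  have := mul_le_mul_of_nonneg_left hsum (by positivity : (0 : ℝ) ≤ 1 / Fintype.card X)
  rw [costClustering, costClustering, dL1]
  linarith

end KMeans

theorem dL1_comm {X E : Type*} [Fintype X] [SeminormedAddGroup E] (f g : X → E) :
    dL1 f g = dL1 g f := by
  simp only [dL1, norm_sub_rev (f _)]

section Voronoi

variable {X : Type*} {n k : ℕ} [NeZero k]

theorem norm_sub_nearestIdx_le (f : X → Euc n) (μ : Fin k → Euc n) (x : X) (j : Fin k) :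
    ‖f x - μ (nearestIdx f μ x)‖ ≤ ‖f x - μ j‖ := by
  have h : nearestIdx f μ x ∈ univ.filter fun j => ∀ l, ‖f x - μ j‖ ≤ ‖f x - μ l‖ :=
    min'_mem _ _
  exact (mem_filter.mp h).2 j

theorem iInf_sq_norm_sub_eq_nearestIdx (f : X → Euc n) (μ : Fin k → Euc n) (x : X) :
    ⨅ j, ‖f x - μ j‖ ^ 2 = ‖f x - μ (nearestIdx f μ x)‖ ^ 2 :=
  le_antisymm (ciInf_le (Finite.bddBelow_range _) _)
    (le_ciInf fun j => by gcongr; exact norm_sub_nearestIdx_le f μ x j)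

theorem isClustering_voronoiClustering [Fintype X] [DecidableEq X] (f : X → Euc n)
    (μ : Fin k → Euc n) : IsClustering k (voronoiClustering f μ) := by
  refine ⟨fun i j hij => disjoint_left.mpr fun x hi hj => hij ?_, ?_⟩
  · simp only [voronoiClustering, mem_filter] at hi hj
    exact hi.2.symm.trans hj.2
  · ext x
    simp [voronoiClustering]

theorem costClustering_voronoiClustering_le [Fintype X] [DecidableEq X] (f : X → Euc n)
    (μ : Fin k → Euc n) : costClustering k f (voronoiClustering f μ) ≤ costCenters k f μ := by
  rw [costClustering, costCenters, ← (isClustering_voronoiClustering f μ).sum_sum]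
  gcongr with i
  refine ciInf_le_of_le (bddBelow_range_sum_sq_norm_sub _ _) (μ i) (sum_le_sum fun x hx => ?_)
  rw [iInf_sq_norm_sub_eq_nearestIdx, (mem_filter.mp hx).2]

end Voronoi

section Optimality

variable {X : Type*} [Fintype X] [DecidableEq X] {n k : ℕ}

theorem costCenters_le_costClustering {f : X → Euc n} {μ : Fin k → Euc n}
    (hμ : ∀ ν, costCenters k f μ ≤ costCenters k f ν) {P : Fin k → Finset X}
    (hP : IsClustering k P) : costCenters k f μ ≤ costClustering k f P := by
  have hN : (0 : ℝ) ≤ 1 / Fintype.card X := by positivity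
  rw [costClustering, mul_sum]
  simp_rw [Real.mul_iInf_of_nonneg hN]
  refine le_sum_ciInf_of_forall_le_sum fun ν => (hμ ν).trans ?_
  rw [costCenters, ← mul_sum, ← hP.sum_sum]
  gcongr with i _ x
  exact ciInf_le (Finite.bddBelow_range _) i

variable [NeZero k]

theorem HasUniqueOptClustering.isClustering {f : X → Euc n} {C : Fin k → Finset X}
    (h : HasUniqueOptClustering f C) : IsClustering k C := by
  obtain ⟨⟨μ, hμ⟩, hvor⟩ := h
  exact hvor μ hμ ▸ isClustering_voronoiClustering f μ

theorem HasUniqueOptClustering.costClustering_le {f : X → Euc n} {C : Fin k → Finset X}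
    (h : HasUniqueOptClustering f C) {P : Fin k → Finset X} (hP : IsClustering k P) :
    costClustering k f C ≤ costClustering k f P := by
  obtain ⟨⟨μ, hμ⟩, hvor⟩ := h
  rw [← hvor μ hμ]
  exact (costClustering_voronoiClustering_le f μ).trans (costCenters_le_costClustering hμ hP)

theorem HasUniqueSolution.clusterDiff_lt {η ε : ℝ} {f t : X → Euc n}
    {Cf Ct : Fin k → Finset X} (hf : HasUniqueSolution f Cf η ε) (ht : HasUniqueOptClustering t Ct)
    (hf1 : ∀ x, ‖f x‖ ≤ 1) (ht1 : ∀ x, ‖t x‖ ≤ 1) (hd : 8 * dL1 f t < η) :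
    clusterDiff k Cf Ct < ε := by
  have hCf := hf.1.isClustering
  refine hf.2 Ct ht.isClustering ?_
  calc costClustering k f Ct ≤ costClustering k t Ct + 4 * dL1 f t :=
        costClustering_le_add_dL1 hf1 ht1 ht.isClustering
    _ ≤ costClustering k t Cf + 4 * dL1 f t := by gcongr; exact ht.costClustering_le hCf
    _ ≤ costClustering k f Cf + 4 * dL1 t f + 4 * dL1 f t := by
        gcongr; exact costClustering_le_add_dL1 ht1 hf1 hCf
    _ < costClustering k f Cf + η := by rw [dL1_comm t f]; linarith

end Optimality

theorem Finset.biUnion_symmDiff_biUnion_subset {ι α : Type*} [DecidableEq α] (s : Finset ι)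
    (A B : ι → Finset α) : s.biUnion A ∆ s.biUnion B ⊆ s.biUnion fun i => A i ∆ B i := by
  rw [← coe_subset]
  push_cast [coe_biUnion, coe_symmDiff]
  exact biSup_symmDiff_biSup_le

section Indicators

variable {X : Type*} [DecidableEq X] {k : ℕ}

theorem exists_perm_clusterDiff_eq [Fintype X] (C D : Fin k → Finset X) :
    ∃ τ : Equiv.Perm (Fin k),
      clusterDiff k C D = 1 / Fintype.card X * ∑ i, ((C i ∆ D (τ i)).card : ℝ) := by
  obtain ⟨τ, hτ⟩ := exists_eq_ciInf_of_finite
    (f := fun σ : Equiv.Perm (Fin k) => 1 / (Fintype.card X : ℝ) * ∑ i, ((C i ∆ D (σ i)).card : ℝ))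
  exact ⟨τ, by simpa [clusterDiff, clusterDiffOn] using hτ.symm⟩

theorem dL1_indicator [Fintype X] (A B : Finset X) :
    dL1 (fun x => if x ∈ A then (1 : ℝ) else 0) (fun x => if x ∈ B then (1 : ℝ) else 0) =
      1 / Fintype.card X * (A ∆ B).card := by
  have hnorm : ∀ x, ‖(if x ∈ A then (1 : ℝ) else 0) - if x ∈ B then 1 else 0‖ =
      if x ∈ A ∆ B then 1 else 0 := fun x => by
    by_cases hA : x ∈ A <;> by_cases hB : x ∈ B <;> simp [hA, hB, mem_symmDiff]
  rw [dL1, sum_congr rfl fun x _ => hnorm x, sum_boole, filter_mem_eq_inter, univ_inter]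

theorem card_biUnion_symmDiff_le [Fintype X] (C₁ C₂ D₁ D₂ : Fin k → Finset X)
    (σ τ₁ τ₂ : Equiv.Perm (Fin k)) :
    ((univ.biUnion fun i => C₁ i ∆ C₂ (σ i)) ∆
        (univ.biUnion fun i => D₁ i ∆ D₂ ((τ₂ * σ * τ₁⁻¹) i))).card ≤
      ∑ i, (C₁ i ∆ D₁ (τ₁ i)).card + ∑ i, (C₂ i ∆ D₂ (τ₂ i)).card := by
  have hreindex : (univ.biUnion fun i => D₁ i ∆ D₂ ((τ₂ * σ * τ₁⁻¹) i)) =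
      univ.biUnion fun i => D₁ (τ₁ i) ∆ D₂ (τ₂ (σ i)) := by
    ext x
    simp only [mem_biUnion, mem_univ, true_and]
    rw [τ₁.exists_congr_left (p := fun i => x ∈ D₁ (τ₁ i) ∆ D₂ (τ₂ (σ i)))]
    simp [Equiv.Perm.mul_apply, Equiv.Perm.inv_def]
  rw [hreindex, ← Equiv.sum_comp σ fun i => (C₂ i ∆ D₂ (τ₂ i)).card, ← sum_add_distrib]
  refine (card_le_card (biUnion_symmDiff_biUnion_subset _ _ _)).trans
    (card_biUnion_le.trans (sum_le_sum fun i _ => ?_))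
  rw [symmDiff_symmDiff_symmDiff_comm]
  exact (card_le_card symmDiff_subset_union).trans (card_union_le _ _)

theorem exists_perm_dL1_indSymmDiff_le [Fintype X] (C₁ C₂ D₁ D₂ : Fin k → Finset X)
    (σ : Equiv.Perm (Fin k)) : ∃ ρ : Equiv.Perm (Fin k), dL1 (indSymmDiff C₁ C₂ σ)
      (indSymmDiff D₁ D₂ ρ) ≤ clusterDiff k C₁ D₁ + clusterDiff k C₂ D₂ := by
  obtain ⟨τ₁, hτ₁⟩ := exists_perm_clusterDiff_eq C₁ D₁
  obtain ⟨τ₂, hτ₂⟩ := exists_perm_clusterDiff_eq C₂ D₂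
  refine ⟨τ₂ * σ * τ₁⁻¹, ?_⟩
  unfold indSymmDiff
  rw [dL1_indicator, hτ₁, hτ₂, ← mul_add]
  gcongr
  exact_mod_cast card_biUnion_symmDiff_le C₁ C₂ D₁ D₂ σ τ₁ τ₂

end Indicators

section Covers

variable {X : Type*} [Fintype X]

theorem dL1_le_dist {E : Type*} [SeminormedAddCommGroup E] (f g : X → E) :
    dL1 f g ≤ dist f g := by
  have hsum : ∑ x, ‖f x - g x‖ ≤ Fintype.card X * dist f g := by
    rw [← nsmul_eq_mul]
    exact sum_le_card_nsmul _ _ _ fun x _ => dist_eq_norm (f x) (g x) ▸ dist_le_pi_dist f g x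
  calc dL1 f g ≤ (Fintype.card X : ℝ)⁻¹ * (Fintype.card X * dist f g) := by
        rw [dL1, one_div]; gcongr
    _ ≤ dist f g := by
        rw [← mul_assoc]
        exact mul_le_of_le_one_left dist_nonneg inv_mul_le_one

theorem TotallyBounded.exists_finset_dL1_cover {E : Type*} [SeminormedAddCommGroup E]
    {F : Set (X → E)} (hF : TotallyBounded F) {r : ℝ} (hr : 0 < r) :
    ∃ T : Finset (X → E), ↑T ⊆ F ∧ ∀ f ∈ F, ∃ t ∈ T, dL1 f t ≤ r := by
  obtain ⟨T, hTF, hT, hcov⟩ := Metric.finite_approx_of_totallyBounded hF r hr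
  refine ⟨hT.toFinset, by simpa using hTF, fun f hf => ?_⟩
  obtain ⟨t, ht, hft⟩ := Set.mem_iUnion₂.mp (hcov hf)
  exact ⟨t, hT.mem_toFinset.mpr ht, (dL1_le_dist f t).trans (Metric.mem_ball.mp hft).le⟩

end Covers

theorem exists_finset_card_eq_coveringNumber {α : Type*} {G : Set α} {d : α → α → ℝ} {r : ℝ}
    (h : ∃ T : Finset α, ↑T ⊆ G ∧ ∀ g ∈ G, ∃ t ∈ T, d g t ≤ r) :
    ∃ T : Finset α, ↑T ⊆ G ∧ T.card = coveringNumber G d r ∧ ∀ g ∈ G, ∃ t ∈ T, d g t ≤ r := by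
  obtain ⟨T, hTG, hT⟩ := h
  exact Nat.sInf_mem
    (s := {m | ∃ T : Finset α, ↑T ⊆ G ∧ T.card = m ∧ ∀ g ∈ G, ∃ t ∈ T, d g t ≤ r})
    ⟨T.card, T, hTG, rfl, hT⟩

theorem coveringNumber_le_card {α : Type*} {G : Set α} {d : α → α → ℝ} {r : ℝ} {T : Finset α}
    (hTG : ↑T ⊆ G) (hT : ∀ g ∈ G, ∃ t ∈ T, d g t ≤ r) : coveringNumber G d r ≤ T.card :=
  Nat.sInf_le ⟨T, hTG, rfl, hT⟩

theorem coveringNumber_HF_le {X : Type*} [Fintype X] [DecidableEq X] {n k : ℕ}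
    {F : Set (X → Euc n)} {Cf : (X → Euc n) → Fin k → Finset X} {T : Finset (X → Euc n)}
    (hTF : ↑T ⊆ F) {ε r : ℝ} (hT : ∀ f ∈ F, ∃ t ∈ T, clusterDiff k (Cf f) (Cf t) < ε)
    (hr : 2 * ε ≤ r) : coveringNumber (HF F Cf) dL1 r ≤ k.factorial * T.card ^ 2 := by
  let T' := (T ×ˢ T ×ˢ (univ : Finset (Equiv.Perm (Fin k)))).image
    fun p => indSymmDiff (Cf p.1) (Cf p.2.1) p.2.2
  have hT'HF : ↑T' ⊆ HF F Cf := by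
    rintro _ hh
    obtain ⟨⟨t₁, t₂, σ⟩, hp, rfl⟩ := mem_image.mp hh
    simp only [mem_product] at hp
    exact ⟨t₁, hTF hp.1, t₂, hTF hp.2.1, σ, rfl⟩
  have hT'cov : ∀ h ∈ HF F Cf, ∃ t ∈ T', dL1 h t ≤ r := by
    rintro _ ⟨f₁, hf₁, f₂, hf₂, σ, rfl⟩
    obtain ⟨t₁, ht₁, hd₁⟩ := hT f₁ hf₁
    obtain ⟨t₂, ht₂, hd₂⟩ := hT f₂ hf₂
    obtain ⟨ρ, hρ⟩ := exists_perm_dL1_indSymmDiff_le (Cf f₁) (Cf f₂) (Cf t₁) (Cf t₂) σ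
    exact ⟨indSymmDiff (Cf t₁) (Cf t₂) ρ, mem_image.mpr ⟨(t₁, t₂, ρ), by simp [ht₁, ht₂], rfl⟩,
      by linarith⟩
  calc coveringNumber (HF F Cf) dL1 r ≤ T'.card := coveringNumber_le_card hT'HF hT'cov
    _ ≤ (T ×ˢ T ×ˢ (univ : Finset (Equiv.Perm (Fin k)))).card := card_image_le
    _ = k.factorial * T.card ^ 2 := by
      rw [card_product, card_product, card_univ, Fintype.card_perm, Fintype.card_fin]; ring

theorem covering_number_HF_general (X : Type*) [Fintype X] [DecidableEq X]
    (n k : ℕ) [NeZero k] (η ε : ℝ) (hη : 0 < η) (hε : 0 < ε)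
    (F : Set (X → Euc n)) (hb : ∀ f ∈ F, ∀ x, ‖f x‖ ≤ 1)
    (Cf : (X → Euc n) → Fin k → Finset X)
    (hu : ∀ f ∈ F, HasUniqueSolution f (Cf f) η ε) :
    coveringNumber (HF F Cf) dL1 (4 * ε) ≤
      Nat.factorial k * (coveringNumber F dL1 (η / 12)) ^ 2 := by
  have hF : TotallyBounded F := (isCompact_closedBall (0 : X → Euc n) 1).totallyBounded.subset
    fun f hf => mem_closedBall_zero_iff.mpr ((pi_norm_le_iff_of_nonneg zero_le_one).mpr (hb f hf))
  obtain ⟨T, hTF, hcard, hT⟩ :=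
    exists_finset_card_eq_coveringNumber (hF.exists_finset_dL1_cover (by positivity : 0 < η / 12))
  rw [← hcard]
  refine coveringNumber_HF_le hTF (fun f hf => ?_) (by linarith)
  obtain ⟨t, ht, hd⟩ := hT f hf
  exact ⟨t, ht, (hu f hf).clusterDiff_lt (hu t (hTF ht)).1 (hb f hf) (hb t (hTF ht)) (by linarith)⟩

/-- covering number of `H^F` bounded by `k! · N(F, d_{L1}^X, η/12)²`. -/
theorem covering_number_HF (X : Type*) [Fintype X] [DecidableEq X] [Nonempty X]
    (n k : ℕ) [NeZero k] (η ε : ℝ) (hη : 0 < η) (hε : 0 < ε)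
    (F : Set (X → Euc n)) (hb : ∀ f ∈ F, ∀ x, ‖f x‖ ≤ 1)
    (Cf : (X → Euc n) → Fin k → Finset X)
    (hu : ∀ f ∈ F, HasUniqueSolution f (Cf f) η ε) :
    coveringNumber (HF F Cf) dL1 (4 * ε) ≤
      Nat.factorial k * (coveringNumber F dL1 (η / 12)) ^ 2 :=
  covering_number_HF_general X n k η ε hη hε F hb Cf hu
end
end

section
/- Let F be a class of mappings from a nonempty finite set X to ℝⁿ, and for each coordinate i ∈ {1, …, n}, let F_i = { f_i : f ∈ F } be the class of i-th coordinate functions. Then for every ε > 0, the external covering numbers satisfy N_ext(F, d_{L1}^X, ε) ≤ Π_{i=1}^n N_ext(F_i, d_{L1}^X, ε/n), where on vector-valued functions d_{L1}^X(f, g) = (1/|X|) Σ_{x∈X} ‖f(x) − g(x)‖₂ and on real-valued functions d_{L1}^X(u, v) = (1/|X|) Σ_{x∈X} |u(x) − v(x)|. -/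
open scoped BigOperators symmDiff

noncomputable section

variable {X : Type*} [Fintype X] [DecidableEq X] {n k : ℕ}

section Aux

variable {X : Type*} [Fintype X] [DecidableEq X] {n : ℕ}

lemma euc_abs_le_norm (v : Euc n) (i : Fin n) : |v i| ≤ ‖v‖ := by
  rw [EuclideanSpace.norm_eq]
  rw [← Real.sqrt_sq_eq_abs]
  apply Real.sqrt_le_sqrt
  have : |v i| ^ 2 ≤ ∑ j, ‖v j‖ ^ 2 := by
    have := Finset.single_le_sum (f := fun j => ‖v j‖ ^ 2)
      (fun j _ => sq_nonneg _) (Finset.mem_univ i)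
    simpa [Real.norm_eq_abs, sq_abs] using this
  simpa [sq_abs] using this

lemma euc_norm_le_sum (v : Euc n) : ‖v‖ ≤ ∑ i, |v i| := by
  rw [EuclideanSpace.norm_eq]
  have h1 : ∑ i, ‖v i‖ ^ 2 ≤ (∑ i, |v i|) ^ 2 := by
    simpa [Real.norm_eq_abs] using
      Finset.sum_sq_le_sq_sum_of_nonneg (s := Finset.univ)
        (f := fun i => |v i|) (fun i _ => abs_nonneg _)
  have h2 := Real.sqrt_le_sqrt h1
  rwa [Real.sqrt_sq (Finset.sum_nonneg fun i _ => abs_nonneg (v i))] at h2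

lemma dL1_nonneg {E : Type*} [SeminormedAddGroup E] (f g : X → E) : 0 ≤ dL1 f g := by
  unfold dL1
  apply mul_nonneg (by positivity) (Finset.sum_nonneg fun x _ => norm_nonneg _)

lemma dL1_le_of_pointwise [Nonempty X] {E : Type*} [SeminormedAddGroup E]
    {f g : X → E} {δ : ℝ} (h : ∀ x, ‖f x - g x‖ ≤ δ) : dL1 f g ≤ δ := by
  have hc : (0 : ℝ) < Fintype.card X := by
    exact_mod_cast Fintype.card_pos
  unfold dL1
  rw [one_div, inv_mul_le_iff₀ hc]
  calc ∑ x, ‖f x - g x‖ ≤ ∑ _x : X, δ := Finset.sum_le_sum fun x _ => h x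
    _ = Fintype.card X • δ := by rw [Finset.sum_const, Finset.card_univ]
    _ = (Fintype.card X : ℝ) * δ := by rw [nsmul_eq_mul]

lemma pointwise_le_card_mul_dL1 [Nonempty X] {E : Type*} [SeminormedAddGroup E]
    (f g : X → E) (x : X) : ‖f x - g x‖ ≤ (Fintype.card X : ℝ) * dL1 f g := by
  have hc : (0 : ℝ) < Fintype.card X := by exact_mod_cast Fintype.card_pos
  unfold dL1
  rw [← mul_assoc, mul_one_div, div_self (ne_of_gt hc), one_mul]
  exact Finset.single_le_sum (f := fun x => ‖f x - g x‖)
    (fun y _ => norm_nonneg _) (Finset.mem_univ x)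

/-- coordinate projection contracts `dL1`. -/
lemma dL1_coord_le (f g : X → Euc n) (i : Fin n) :
    dL1 (fun x => f x i) (fun x => g x i) ≤ dL1 f g := by
  unfold dL1
  apply mul_le_mul_of_nonneg_left _ (by positivity)
  apply Finset.sum_le_sum
  intro x _
  have : (f x - g x) i = f x i - g x i := rfl
  calc ‖f x i - g x i‖ = |(f x - g x) i| := by rw [this, Real.norm_eq_abs]
    _ ≤ ‖f x - g x‖ := euc_abs_le_norm _ i

/-- a `dL1`-ball of real-valued functions admits a finite `δ`-cover. -/
lemma ball_finite_cover [Nonempty X] (t : X → ℝ) (R δ : ℝ) (hδ : 0 < δ) :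
    ∃ T : Finset (X → ℝ), ∀ u : X → ℝ, dL1 u t ≤ R → ∃ v ∈ T, dL1 u v ≤ δ := by
  set M : ℤ := ⌈R * (Fintype.card X : ℝ) / δ⌉ with hM
  refine ⟨(Fintype.piFinset fun _ : X => Finset.Icc (-M) M).image
      (fun c => fun x => t x + δ * (c x : ℝ)), ?_⟩
  intro u hu
  have hbound : ∀ x, |u x - t x| ≤ R * (Fintype.card X : ℝ) := by
    intro x
    have := pointwise_le_card_mul_dL1 u t x
    rw [Real.norm_eq_abs] at this
    calc |u x - t x| ≤ (Fintype.card X : ℝ) * dL1 u t := this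
      _ ≤ (Fintype.card X : ℝ) * R := by
          apply mul_le_mul_of_nonneg_left hu (by positivity)
      _ = R * (Fintype.card X : ℝ) := mul_comm _ _
  set B : ℝ := R * (Fintype.card X : ℝ) with hB
  set c : X → ℤ := fun x => ⌊(u x - t x) / δ⌋ with hc
  have hMB : B / δ ≤ (M : ℝ) := Int.le_ceil _
  have hMB' : B ≤ (M : ℝ) * δ := by
    rw [div_le_iff₀ hδ] at hMB; linarith
  have hmem : c ∈ Fintype.piFinset fun _ : X => Finset.Icc (-M) M := by
    rw [Fintype.mem_piFinset]
    intro x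
    have habs := abs_le.mp (hbound x)
    rw [Finset.mem_Icc]
    constructor
    · rw [Int.le_floor]
      push_cast
      rw [le_div_iff₀ hδ, neg_mul]
      linarith [habs.1]
    · have h1 : ((c x : ℝ)) ≤ (u x - t x) / δ := Int.floor_le _
      have h2 : (u x - t x) / δ ≤ (M : ℝ) := by
        refine le_trans ?_ hMB
        gcongr
        exact habs.2
      exact_mod_cast h1.trans h2
  refine ⟨fun x => t x + δ * (c x : ℝ), Finset.mem_image_of_mem _ hmem, ?_⟩
  apply dL1_le_of_pointwise
  intro x
  have h1 : ((c x : ℝ)) * δ ≤ u x - t x := by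
    have h := Int.floor_le ((u x - t x) / δ)
    rw [le_div_iff₀ hδ] at h
    exact h
  have h2 : u x - t x < ((c x : ℝ) + 1) * δ := by
    have := Int.lt_floor_add_one ((u x - t x) / δ)
    rw [div_lt_iff₀ hδ] at this
    exact this
  rw [Real.norm_eq_abs, abs_le]
  constructor <;> nlinarith

end Aux

/-- the external covering number of a vector-valued class is bounded by the
product of the external covering numbers of its coordinate classes. -/
theorem covering_number_coordinatewise (X : Type*) [Fintype X] [DecidableEq X] [Nonempty X]
    (n : ℕ) (hn : 1 ≤ n) (F : Set (X → Euc n)) (ε : ℝ) (hε : 0 < ε) :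
    extCoveringNumber F dL1 ε ≤
      ∏ i : Fin n, extCoveringNumber (coordClass F i) dL1 (ε / n) := by
  classical
  have hn' : (0 : ℝ) < n := by exact_mod_cast hn
  have hδ : 0 < ε / (n : ℝ) := div_pos hε hn'
  have hc : (0 : ℝ) < Fintype.card X := by exact_mod_cast Fintype.card_pos
  by_cases hS : {m : ℕ | ∃ T : Finset (X → Euc n), T.card = m ∧
      ∀ g ∈ F, ∃ t ∈ T, dL1 g t ≤ ε}.Nonempty
  swap
  · have h0 : extCoveringNumber F dL1 ε = 0 := by
      unfold extCoveringNumber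
      rw [Set.not_nonempty_iff_eq_empty] at hS
      rw [hS, Nat.sInf_empty]
    rw [h0]; exact Nat.zero_le _
  obtain ⟨m0, T0, hT0card, hT0⟩ := hS
  -- each coordinate covering set is nonempty
  have hcoord : ∀ i : Fin n, {m : ℕ | ∃ T : Finset (X → ℝ), T.card = m ∧
      ∀ g ∈ coordClass F i, ∃ t ∈ T, dL1 g t ≤ ε / n}.Nonempty := by
    intro i
    have hball : ∀ t : X → ℝ, ∃ T : Finset (X → ℝ),
        ∀ u, dL1 u t ≤ ε → ∃ v ∈ T, dL1 u v ≤ ε / n :=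
      fun t => ball_finite_cover t ε (ε / n) hδ
    choose G hG using hball
    refine ⟨_, T0.biUnion (fun t => G (fun x => t x i)), rfl, ?_⟩
    rintro g ⟨f, hf, rfl⟩
    obtain ⟨t, ht, hft⟩ := hT0 f hf
    have hco : dL1 (fun x => f x i) (fun x => t x i) ≤ ε :=
      (dL1_coord_le f t i).trans hft
    obtain ⟨v, hv, hvd⟩ := hG (fun x => t x i) _ hco
    exact ⟨v, Finset.mem_biUnion.mpr ⟨t, ht, hv⟩, hvd⟩
  -- choose optimal coordinate covers
  have hmem : ∀ i : Fin n, ∃ P : Finset (X → ℝ),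
      P.card = extCoveringNumber (coordClass F i) dL1 (ε / n) ∧
      ∀ g ∈ coordClass F i, ∃ p ∈ P, dL1 g p ≤ ε / n := by
    intro i
    obtain ⟨P, hP1, hP2⟩ := Nat.sInf_mem (hcoord i)
    exact ⟨P, hP1, hP2⟩
  choose P hPcard hPcov using hmem
  -- the product cover
  set Gbig : Finset (X → Euc n) := (Fintype.piFinset P).image
    (fun c => fun x => (WithLp.equiv 2 (Fin n → ℝ)).symm (fun i => c i x)) with hGbig
  have key : ∀ g ∈ F, ∃ t ∈ Gbig, dL1 g t ≤ ε := by
    intro f hf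
    have hgi : ∀ i : Fin n, (fun x => f x i) ∈ coordClass F i := fun i => ⟨f, hf, rfl⟩
    choose p hp hpd using fun i => hPcov i _ (hgi i)
    refine ⟨_, Finset.mem_image_of_mem _ (Fintype.mem_piFinset.mpr hp), ?_⟩
    unfold dL1
    rw [one_div, inv_mul_le_iff₀ hc]
    have hx : ∀ x : X,
        ‖f x - (WithLp.equiv 2 (Fin n → ℝ)).symm (fun i => p i x)‖ ≤
          ∑ i, |f x i - p i x| := by
      intro x
      refine le_trans (euc_norm_le_sum _) (le_of_eq ?_)
      apply Finset.sum_congr rfl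
      intro i _
      congr 1
    have hsum : ∀ i : Fin n, ∑ x, |f x i - p i x| ≤ (Fintype.card X : ℝ) * (ε / n) := by
      intro i
      have h := hpd i
      unfold dL1 at h
      rw [one_div, inv_mul_le_iff₀ hc] at h
      simpa [Real.norm_eq_abs] using h
    calc ∑ x, ‖f x - (WithLp.equiv 2 (Fin n → ℝ)).symm (fun i => p i x)‖
        ≤ ∑ x, ∑ i, |f x i - p i x| := Finset.sum_le_sum fun x _ => hx x
      _ = ∑ i, ∑ x, |f x i - p i x| := Finset.sum_comm
      _ ≤ ∑ _i : Fin n, (Fintype.card X : ℝ) * (ε / n) :=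
          Finset.sum_le_sum fun i _ => hsum i
      _ = (n : ℝ) * ((Fintype.card X : ℝ) * (ε / n)) := by
          rw [Finset.sum_const, Finset.card_univ, Fintype.card_fin, nsmul_eq_mul]
      _ = (Fintype.card X : ℝ) * ε := by field_simp
  calc extCoveringNumber F dL1 ε ≤ Gbig.card := Nat.sInf_le ⟨Gbig, rfl, key⟩
    _ ≤ (Fintype.piFinset P).card := Finset.card_image_le
    _ = ∏ i, (P i).card := Fintype.card_piFinset P
    _ = ∏ i, extCoveringNumber (coordClass F i) dL1 (ε / n) := by
        exact Finset.prod_congr rfl fun i _ => hPcard i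
end
end
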